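/- arXiv:2103.00357 — 4 statements merged into one kernel-verified Lean document; each statement's English description precedes it below -/
import Mathlib

section
/- Let d be a positive integer, ℓ₀ an integer with 0 ≤ ℓ₀ ≤ d, and for ℓ₀ ≤ ℓ ≤ d+1 let M_ℓ, G_ℓ : [0,∞) → ℝ be continuous functions with M_{d+1} ≡ 0 and G_{d+1} ≡ 0. Suppose that for every ℓ with ℓ₀ ≤ ℓ ≤ d and every t ≥ 0, G_ℓ(t) = M_ℓ(t) + ℓ·∫_0^t e^{−s} G_{ℓ+1}(s) ds. Then for every such ℓ and every t ≥ 0, G_ℓ(t) = M_ℓ(t) + ∑_{r=ℓ+1}^{d} ℓ·C(r−1, ℓ)·∫_0^t (e^{−s} − e^{−t})^{r−ℓ−1} e^{−s} M_r(s) ds. -/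
/-!
Put `Q_k[g](t) = ∫₀ᵗ (a s - a t)^k g(s) ds`. Splitting off one factor `a s - a t` gives
`Q_{k+1}[g] = Q_k[a g] - a Q_k[g]`, and an induction on `k`, over all `g` at once, turns this into
`Q_{k+1}[g]' = -(k+1) a' Q_k[g]`. For `a s = e^{-s}` this says
`Q_{k+1}[g](t) = (k+1) ∫₀ᵗ e^{-s} Q_k[g](s) ds`: integrating against `e^{-s}` raises the power of
the kernel by one. Hence, with `S_ℓ = ∑_{r=ℓ+1}^d C(r-1,ℓ) Q_{r-ℓ-1}[e^{-s} M_r]` and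
`(ℓ+1) C(r-1,ℓ+1) = (r-ℓ-1) C(r-1,ℓ)`, one gets `S_ℓ = ∫₀ᵗ e^{-s} (M_{ℓ+1} + (ℓ+1) S_{ℓ+1}) ds`
for `ℓ < d`, and `G_ℓ = M_ℓ + ℓ S_ℓ` follows by downward induction from `ℓ = d`, where the
recursion reads `G_d = M_d` because `G_{d+1} = 0`.
-/

open Real

theorem hasDerivAt_exp_neg (x : ℝ) : HasDerivAt (fun s => exp (-s)) (-exp (-x)) x := by
  simpa using (hasDerivAt_neg x).exp

noncomputable def powKernelIntegral (a : ℝ → ℝ) (k : ℕ) (g : ℝ → ℝ) (t : ℝ) : ℝ :=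
  ∫ s in (0:ℝ)..t, (a s - a t) ^ k * g s

namespace powKernelIntegral

variable {a a' g : ℝ → ℝ}

theorem zero_eq : powKernelIntegral a 0 g = fun t => ∫ s in (0:ℝ)..t, g s := by
  ext t
  simp [powKernelIntegral]

theorem hasDerivAt_zero (hg : Continuous g) (t : ℝ) :
    HasDerivAt (powKernelIntegral a 0 g) (g t) t := by
  simpa only [zero_eq] using (hg.integral_hasStrictDerivAt 0 t).hasDerivAt

theorem succ_eq (ha : Continuous a) (hg : Continuous g) (k : ℕ) :
    powKernelIntegral a (k + 1) g =
      fun t => powKernelIntegral a k (a * g) t - a t * powKernelIntegral a k g t := by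
  ext t
  simp only [powKernelIntegral, ← intervalIntegral.integral_const_mul]
  rw [← intervalIntegral.integral_sub (Continuous.intervalIntegrable (by fun_prop) _ _)
    (Continuous.intervalIntegrable (by fun_prop) _ _)]
  congr 1 with s
  simp only [Pi.mul_apply]
  ring

theorem hasDerivAt_succ (ha : ∀ x, HasDerivAt a (a' x) x) (k : ℕ) (hg : Continuous g) (t : ℝ) :
    HasDerivAt (powKernelIntegral a (k + 1) g)
      (-(k + 1) * a' t * powKernelIntegral a k g t) t := by
  have ha_cont : Continuous a := continuous_iff_continuousAt.2 fun x => (ha x).continuousAt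
  induction k generalizing g with
  | zero =>
    rw [succ_eq ha_cont hg]
    refine ((hasDerivAt_zero (ha_cont.mul hg) t).sub
      ((ha t).mul (hasDerivAt_zero hg t))).congr_deriv ?_
    simp only [Pi.mul_apply, zero_eq]
    ring
  | succ k ih =>
    rw [succ_eq ha_cont hg]
    refine ((ih (ha_cont.mul hg)).sub ((ha t).mul (ih hg))).congr_deriv ?_
    rw [succ_eq ha_cont hg]
    push_cast
    ring

theorem continuous (ha : ∀ x, HasDerivAt a (a' x) x) (hg : Continuous g) (k : ℕ) :
    Continuous (powKernelIntegral a k g) := by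
  refine continuous_iff_continuousAt.2 fun t => ?_
  cases k with
  | zero => exact (hasDerivAt_zero hg t).continuousAt
  | succ k => exact (hasDerivAt_succ ha k hg t).continuousAt

theorem succ_eq_integral (ha : ∀ x, HasDerivAt a (a' x) x) (ha' : Continuous a')
    (hg : Continuous g) (k : ℕ) (t : ℝ) :
    powKernelIntegral a (k + 1) g t =
      -(k + 1) * ∫ s in (0:ℝ)..t, a' s * powKernelIntegral a k g s := by
  have hQ := continuous ha hg k
  rw [← intervalIntegral.integral_const_mul,
    intervalIntegral.integral_eq_sub_of_hasDerivAt (fun x _ => by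
      simpa only [mul_assoc] using hasDerivAt_succ ha k hg x)
      (Continuous.intervalIntegrable (by fun_prop) _ _)]
  simp [powKernelIntegral]

theorem exp_succ_eq_integral (hg : Continuous g) (k : ℕ) (t : ℝ) :
    powKernelIntegral (fun s => exp (-s)) (k + 1) g t =
      (k + 1) * ∫ s in (0:ℝ)..t, exp (-s) * powKernelIntegral (fun s => exp (-s)) k g s := by
  rw [succ_eq_integral hasDerivAt_exp_neg (by fun_prop) hg]
  simp only [neg_mul, intervalIntegral.integral_neg, mul_neg, neg_neg]

end powKernelIntegral

open powKernelIntegral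

noncomputable def resolventSum (d : ℕ) (f : ℕ → ℝ → ℝ) (ℓ : ℕ) (t : ℝ) : ℝ :=
  ∑ r ∈ Finset.Icc (ℓ + 1) d, ((r - 1).choose ℓ : ℝ) *
    powKernelIntegral (fun s => exp (-s)) (r - ℓ - 1) (fun s => exp (-s) * f r s) t

section resolventSum

variable {d ℓ : ℕ} {f : ℕ → ℝ → ℝ}

theorem continuous_resolventSum (hf : ∀ r ∈ Finset.Icc (ℓ + 1) d, Continuous (f r)) :
    Continuous (resolventSum d f ℓ) := by
  refine continuous_finsetSum _ fun r hr => (continuous hasDerivAt_exp_neg ?_ _).const_mul _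
  have := hf r hr
  fun_prop

theorem integral_resolventSum_succ (hf : ∀ r ∈ Finset.Ioc (ℓ + 1) d, Continuous (f r)) (t : ℝ) :
    ((ℓ : ℝ) + 1) * ∫ s in (0:ℝ)..t, exp (-s) * resolventSum d f (ℓ + 1) s =
      ∑ r ∈ Finset.Ioc (ℓ + 1) d, ((r - 1).choose ℓ : ℝ) *
        powKernelIntegral (fun s => exp (-s)) (r - ℓ - 1) (fun s => exp (-s) * f r s) t := by
  have hg (r) (hr : r ∈ Finset.Ioc (ℓ + 1) d) : Continuous fun s => exp (-s) * f r s := by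
    have := hf r hr
    fun_prop
  have hterm (r) (hr : r ∈ Finset.Ioc (ℓ + 1) d) (k : ℕ) :
      IntervalIntegrable (fun s => exp (-s) *
        powKernelIntegral (fun s => exp (-s)) k (fun s => exp (-s) * f r s) s)
        MeasureTheory.volume 0 t :=
    ((continuous_neg.rexp).mul (continuous hasDerivAt_exp_neg (hg r hr) k)).intervalIntegrable _ _
  calc ((ℓ : ℝ) + 1) * ∫ s in (0:ℝ)..t, exp (-s) * resolventSum d f (ℓ + 1) s
      = ∑ r ∈ Finset.Ioc (ℓ + 1) d, ((ℓ : ℝ) + 1) * ((r - 1).choose (ℓ + 1) : ℝ) *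
          ∫ s in (0:ℝ)..t, exp (-s) * powKernelIntegral (fun s => exp (-s)) (r - (ℓ + 1) - 1)
            (fun s => exp (-s) * f r s) s := by
        simp only [resolventSum, Finset.Icc_add_one_left_eq_Ioc, Finset.mul_sum,
          mul_left_comm (exp _)]
        rw [intervalIntegral.integral_finsetSum fun r hr => (hterm r hr _).const_mul _,
          Finset.mul_sum]
        simp only [intervalIntegral.integral_const_mul, mul_assoc]
    _ = _ := by
        refine Finset.sum_congr rfl fun r hr => ?_
        obtain ⟨hℓr, -⟩ := Finset.mem_Ioc.1 hr
        have hchoose : ((ℓ : ℝ) + 1) * ((r - 1).choose (ℓ + 1) : ℝ) =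
            ((r - 1).choose ℓ : ℝ) * (((r - (ℓ + 1) - 1 : ℕ) : ℝ) + 1) := by
          have := Nat.choose_succ_right_eq (r - 1) ℓ
          rw [show r - 1 - ℓ = r - (ℓ + 1) - 1 + 1 by omega] at this
          exact_mod_cast (mul_comm _ _).trans this
        rw [show r - ℓ - 1 = r - (ℓ + 1) - 1 + 1 by omega, exp_succ_eq_integral (hg r hr), hchoose,
          mul_assoc]

theorem resolventSum_eq_integral (hℓ : ℓ < d)
    (hf : ∀ r ∈ Finset.Icc (ℓ + 1) d, Continuous (f r)) (t : ℝ) :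
    resolventSum d f ℓ t =
      ∫ s in (0:ℝ)..t, exp (-s) * (f (ℓ + 1) s + (ℓ + 1) * resolventSum d f (ℓ + 1) s) := by
  have hf_succ := hf (ℓ + 1) (Finset.left_mem_Icc.2 hℓ)
  have hS := continuous_resolventSum (ℓ := ℓ + 1) fun r hr =>
    hf r (Finset.Icc_subset_Icc_left (by omega) hr)
  simp only [mul_add, mul_left_comm (exp _) ((ℓ : ℝ) + 1)]
  rw [intervalIntegral.integral_add ((by fun_prop : Continuous _).intervalIntegrable _ _)
      ((by fun_prop : Continuous _).intervalIntegrable _ _), intervalIntegral.integral_const_mul,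
    integral_resolventSum_succ fun r hr => hf r (Finset.Ioc_subset_Icc_self hr), resolventSum,
    ← Finset.add_sum_Ioc_eq_sum_Icc hℓ]
  simp [zero_eq]

end resolventSum

theorem eq_add_mul_resolventSum {d ℓ₀ : ℕ} {f M G : ℕ → ℝ → ℝ}
    (hf : ∀ r ∈ Finset.Icc (ℓ₀ + 1) d, Continuous (f r))
    (hfM : ∀ r (s : ℝ), 0 ≤ s → f r s = M r s)
    (hGtop : ∀ t : ℝ, 0 ≤ t → G (d + 1) t = 0)
    (hrec : ∀ ℓ, ℓ₀ ≤ ℓ → ℓ ≤ d → ∀ t : ℝ, 0 ≤ t →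
      G ℓ t = M ℓ t + (ℓ : ℝ) * ∫ s in (0:ℝ)..t, exp (-s) * G (ℓ + 1) s)
    {ℓ : ℕ} (hℓ : ℓ₀ ≤ ℓ) (hℓd : ℓ ≤ d) {t : ℝ} (ht : 0 ≤ t) :
    G ℓ t = M ℓ t + ℓ * resolventSum d f ℓ t := by
  induction hℓd using Nat.decreasingInduction generalizing t with
  | self =>
    rw [hrec d hℓ le_rfl t ht, resolventSum, Finset.Icc_eq_empty (by omega),
      intervalIntegral.integral_congr (g := 0) fun s hs => by
        simp [hGtop s (Set.uIcc_of_le ht ▸ hs).1]]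
    simp
  | of_succ ℓ hℓd ih =>
    rw [hrec ℓ hℓ hℓd.le t ht, resolventSum_eq_integral hℓd fun r hr => hf r (by grind)]
    congr 2
    refine intervalIntegral.integral_congr fun s hs => ?_
    have hs0 : 0 ≤ s := (Set.uIcc_of_le ht ▸ hs).1
    rw [ih (by omega) hs0, hfM _ s hs0]
    push_cast
    ring

theorem integral_recursion_resolution_general
    (d : ℕ) (ℓ₀ : ℕ)
    (M G : ℕ → ℝ → ℝ)
    (hMcont : ∀ ℓ, ℓ₀ ≤ ℓ → ℓ ≤ d + 1 → ContinuousOn (M ℓ) (Set.Ici 0))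
    (hGtop : ∀ t : ℝ, 0 ≤ t → G (d + 1) t = 0)
    (hrec : ∀ ℓ, ℓ₀ ≤ ℓ → ℓ ≤ d → ∀ t : ℝ, 0 ≤ t →
      G ℓ t = M ℓ t + (ℓ : ℝ) * ∫ s in (0:ℝ)..t, Real.exp (-s) * G (ℓ + 1) s) :
    ∀ ℓ, ℓ₀ ≤ ℓ → ℓ ≤ d → ∀ t : ℝ, 0 ≤ t →
      G ℓ t = M ℓ t + ∑ r ∈ Finset.Icc (ℓ + 1) d, (ℓ : ℝ) * ((r - 1).choose ℓ : ℝ) *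
        ∫ s in (0:ℝ)..t,
          (Real.exp (-s) - Real.exp (-t)) ^ (r - ℓ - 1) * Real.exp (-s) * M r s := by
  intro ℓ hℓ hℓd t ht
  set f : ℕ → ℝ → ℝ := fun r u => M r (max u 0)
  have hf (r : ℕ) (hr : r ∈ Finset.Icc (ℓ₀ + 1) d) : Continuous (f r) :=
    (hMcont r (by grind) (by grind)).comp_continuous (continuous_id.max continuous_const)
      fun u => le_max_right u 0
  have hfM (r : ℕ) (s : ℝ) (hs : 0 ≤ s) : f r s = M r s := by simp only [f, max_eq_left hs]
  rw [eq_add_mul_resolventSum hf hfM hGtop hrec hℓ hℓd ht, resolventSum, Finset.mul_sum]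
  refine congrArg _ (Finset.sum_congr rfl fun r _ => ?_)
  rw [mul_assoc]
  refine congrArg _ (congrArg _ (intervalIntegral.integral_congr fun s hs => ?_))
  simp only [hfM r s (Set.uIcc_of_le ht ▸ hs).1, mul_assoc]

/-- **Resolution of the integral recursion** (equation (3.17) of the paper). Let `d ≥ 1`,
`0 ≤ ℓ₀ ≤ d`, and for `ℓ₀ ≤ ℓ ≤ d + 1` let `M_ℓ, G_ℓ : [0,∞) → ℝ` be continuous with
`M_{d+1} ≡ 0 ≡ G_{d+1}`. If `G_ℓ(t) = M_ℓ(t) + ℓ ∫_0^t e^{−s} G_{ℓ+1}(s) ds` for all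
`ℓ₀ ≤ ℓ ≤ d` and `t ≥ 0`, then
`G_ℓ(t) = M_ℓ(t) + ∑_{r=ℓ+1}^d ℓ C(r−1,ℓ) ∫_0^t (e^{−s} − e^{−t})^{r−ℓ−1} e^{−s} M_r(s) ds`. -/
theorem integral_recursion_resolution
    (d : ℕ) (hd : 1 ≤ d) (ℓ₀ : ℕ) (hℓ₀ : ℓ₀ ≤ d)
    (M G : ℕ → ℝ → ℝ)
    (hMcont : ∀ ℓ, ℓ₀ ≤ ℓ → ℓ ≤ d + 1 → ContinuousOn (M ℓ) (Set.Ici 0))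
    (hGcont : ∀ ℓ, ℓ₀ ≤ ℓ → ℓ ≤ d + 1 → ContinuousOn (G ℓ) (Set.Ici 0))
    (hMtop : ∀ t : ℝ, 0 ≤ t → M (d + 1) t = 0)
    (hGtop : ∀ t : ℝ, 0 ≤ t → G (d + 1) t = 0)
    (hrec : ∀ ℓ, ℓ₀ ≤ ℓ → ℓ ≤ d → ∀ t : ℝ, 0 ≤ t →
      G ℓ t = M ℓ t + (ℓ : ℝ) * ∫ s in (0:ℝ)..t, Real.exp (-s) * G (ℓ + 1) s) :
    ∀ ℓ, ℓ₀ ≤ ℓ → ℓ ≤ d → ∀ t : ℝ, 0 ≤ t →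
      G ℓ t = M ℓ t + ∑ r ∈ Finset.Icc (ℓ + 1) d, (ℓ : ℝ) * ((r - 1).choose ℓ : ℝ) *
        ∫ s in (0:ℝ)..t,
          (Real.exp (-s) - Real.exp (-t)) ^ (r - ℓ - 1) * Real.exp (-s) * M r s :=
  integral_recursion_resolution_general d ℓ₀ M G hMcont hGtop hrec
end

section
/- For all integers 0 ≤ ℓ ≤ d and every t ≥ 0, e^{ℓt}·β(d, e^{−t}, ℓ) = 1 + ℓ·∫_0^t e^{ℓs}·β(d, e^{−s}, ℓ+1) ds, where β(d, z, d+1) := 0. -/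
open Real

/-- The point mass `b(d,z,ℓ) = C(d,ℓ) z^ℓ (1−z)^{d−ℓ}` of the `Binomial(d,z)` distribution. -/
noncomputable def binomPMF (d ℓ : ℕ) (z : ℝ) : ℝ :=
  (d.choose ℓ : ℝ) * z ^ ℓ * (1 - z) ^ (d - ℓ)

/-- The upper tail `β(d,z,ℓ) = ∑_{r=ℓ}^d C(d,r) z^r (1−z)^{d−r}` of `Binomial(d,z)`;
note `binomTail d (d+1) z = 0` since the index set is empty. -/
noncomputable def binomTail (d ℓ : ℕ) (z : ℝ) : ℝ :=
  ∑ r ∈ Finset.Icc ℓ d, binomPMF d r z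

/-!
Put `F(s) = e^{ℓs} β(d, e^{−s}, ℓ)`, so that `F(0) = β(d, 1, ℓ) = 1`, and apply the fundamental
theorem of calculus to `F`. Writing the tail as a sum of Bernstein polynomials `B_{d,ν}`, the
derivatives `B'_{d+1,ν+1} = (d+1)(B_{d,ν} − B_{d,ν+1})` telescope, so `z ↦ β(d+1, z, ℓ+1)` has
derivative `(d+1) b(d, z, ℓ)`. Since `z (d+1) b(d, z, ℓ) = (ℓ+1) b(d+1, z, ℓ+1)`, the chain-rule
term in `F'` cancels exactly the point mass in `β(d, z, ℓ) = b(d, z, ℓ) + β(d, z, ℓ+1)`, leaving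
`F'(s) = ℓ e^{ℓs} β(d, e^{−s}, ℓ+1)`.
-/

open Finset Polynomial

theorem derivative_sum_bernsteinPolynomial_Icc (R : Type*) [CommRing R] {ℓ d : ℕ} (h : ℓ ≤ d) :
    derivative (∑ r ∈ Icc (ℓ + 1) (d + 1), bernsteinPolynomial R (d + 1) r) =
      (d + 1 : R[X]) * bernsteinPolynomial R d ℓ := by
  rw [← map_add_right_Icc, sum_map, derivative_sum]
  simp only [addRightEmbedding_apply, bernsteinPolynomial.derivative_succ, ← mul_sum,
    add_tsub_cancel_right]
  have htel := sum_Icc_sub h (bernsteinPolynomial R d)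
  rw [bernsteinPolynomial.eq_zero_of_lt R d.lt_add_one, sum_sub_distrib] at htel
  rw [sum_sub_distrib]
  push_cast
  linear_combination -(d + 1 : R[X]) * htel

theorem binomPMF_eq_eval (d r : ℕ) (z : ℝ) :
    binomPMF d r z = (bernsteinPolynomial ℝ d r).eval z := by
  simp [binomPMF, bernsteinPolynomial]

theorem binomTail_eq_eval (d ℓ : ℕ) (z : ℝ) :
    binomTail d ℓ z = (∑ r ∈ Icc ℓ d, bernsteinPolynomial ℝ d r).eval z := by
  simp [binomTail, binomPMF_eq_eval, eval_finsetSum]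

theorem continuous_binomTail (d ℓ : ℕ) : Continuous (binomTail d ℓ) := by
  simpa only [funext (binomTail_eq_eval d ℓ)] using Polynomial.continuous _

theorem binomTail_zero_eq_one (d : ℕ) (z : ℝ) : binomTail d 0 z = 1 := by
  rw [binomTail_eq_eval, ← Nat.range_succ_eq_Icc_zero, bernsteinPolynomial.sum, eval_one]

theorem binomTail_at_one {d ℓ : ℕ} (h : ℓ ≤ d) : binomTail d ℓ 1 = 1 := by
  simp [binomTail_eq_eval, eval_finsetSum, bernsteinPolynomial.eval_at_1, h]

theorem binomTail_eq_binomPMF_add {d ℓ : ℕ} (h : ℓ ≤ d) (z : ℝ) :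
    binomTail d ℓ z = binomPMF d ℓ z + binomTail d (ℓ + 1) z := by
  rw [binomTail, binomTail, ← insert_Icc_add_one_left_eq_Icc h, sum_insert (by simp)]

theorem hasDerivAt_binomTail {d ℓ : ℕ} (h : ℓ ≤ d) (z : ℝ) :
    HasDerivAt (binomTail (d + 1) (ℓ + 1)) ((d + 1) * binomPMF d ℓ z) z := by
  have := (∑ r ∈ Icc (ℓ + 1) (d + 1), bernsteinPolynomial ℝ (d + 1) r).hasDerivAt z
  rw [derivative_sum_bernsteinPolynomial_Icc ℝ h] at this
  simpa [funext (binomTail_eq_eval _ _), binomPMF_eq_eval] using this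

theorem mul_add_one_mul_binomPMF (d ℓ : ℕ) (z : ℝ) :
    z * ((d + 1) * binomPMF d ℓ z) = (ℓ + 1) * binomPMF (d + 1) (ℓ + 1) z := by
  have hc : ((d + 1) * d.choose ℓ : ℝ) = (d + 1).choose (ℓ + 1) * (ℓ + 1) := by
    exact_mod_cast Nat.add_one_mul_choose_eq d ℓ
  simp only [binomPMF, Nat.add_sub_add_right]
  linear_combination z ^ (ℓ + 1) * (1 - z) ^ (d - ℓ) * hc

theorem hasDerivAt_exp_mul_binomTail {d ℓ : ℕ} (h : ℓ ≤ d) (s : ℝ) :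
    HasDerivAt (fun s => exp (ℓ * s) * binomTail d ℓ (exp (-s)))
      (ℓ * (exp (ℓ * s) * binomTail d (ℓ + 1) (exp (-s)))) s := by
  obtain _ | ℓ := ℓ
  · simpa [binomTail_zero_eq_one] using hasDerivAt_const s (1 : ℝ)
  obtain ⟨d, rfl⟩ : ∃ d', d = d' + 1 := ⟨d - 1, by omega⟩
  have hE := ((hasDerivAt_id s).const_mul ((ℓ + 1 : ℕ) : ℝ)).exp
  have hT := (hasDerivAt_binomTail (Nat.le_of_succ_le_succ h) (exp (-s))).comp s
    (hasDerivAt_neg s).exp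
  refine (hE.mul hT).congr_deriv ?_
  dsimp only [Function.comp_apply, id]
  rw [binomTail_eq_binomPMF_add h]
  push_cast
  linear_combination -exp ((ℓ + 1) * s) * mul_add_one_mul_binomPMF d ℓ (exp (-s))

theorem binomTail_integral_identity_general (d ℓ : ℕ) (hℓd : ℓ ≤ d) (t : ℝ) :
    Real.exp (ℓ * t) * binomTail d ℓ (Real.exp (-t))
      = 1 + (ℓ : ℝ) * ∫ s in (0:ℝ)..t,
          Real.exp (ℓ * s) * binomTail d (ℓ + 1) (Real.exp (-s)) := by
  have hcont : Continuous fun s => (ℓ : ℝ) * (exp (ℓ * s) * binomTail d (ℓ + 1) (exp (-s))) := by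
    have := continuous_binomTail d (ℓ + 1)
    fun_prop
  have hFTC := intervalIntegral.integral_eq_sub_of_hasDerivAt
    (fun s _ => hasDerivAt_exp_mul_binomTail hℓd s) (hcont.intervalIntegrable 0 t)
  rw [intervalIntegral.integral_const_mul] at hFTC
  simp only [mul_zero, neg_zero, exp_zero, binomTail_at_one hℓd, mul_one] at hFTC
  linarith

/-- Equation (3.18) of the paper: for all `0 ≤ ℓ ≤ d` and `t ≥ 0`,
`e^{ℓt} β(d, e^{−t}, ℓ) = 1 + ℓ ∫_0^t e^{ℓs} β(d, e^{−s}, ℓ+1) ds`,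
where `β(d, z, d+1) := 0`. -/
theorem binomTail_integral_identity (d ℓ : ℕ) (hℓd : ℓ ≤ d) (t : ℝ) (ht : 0 ≤ t) :
    Real.exp (ℓ * t) * binomTail d ℓ (Real.exp (-t))
      = 1 + (ℓ : ℝ) * ∫ s in (0:ℝ)..t,
          Real.exp (ℓ * s) * binomTail d (ℓ + 1) (Real.exp (-s)) :=
  binomTail_integral_identity_general d ℓ hℓd t
end

section
/- Let p : ℕ×ℕ → [0,1] satisfy ∑_{d,θ} p(d,θ) = 1 and λ := ∑_{d,θ} d·p(d,θ) ∈ (0,∞), define h_B(z) := ∑_{d=1}^∞ ∑_{θ=1}^{d} p(d,θ) ∑_{ℓ=d−θ}^{d} ℓ·b(d,z,ℓ) for z ∈ [0,1], and set ẑ := sup{z ∈ [0,1] : λz² = h_B(z)}. If λ ≠ h_B(1), then ẑ < 1 and λz² > h_B(z) for every z ∈ (ẑ, 1]. -/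
open Real

/-- `h_B(z) = ∑_{d=1}^∞ ∑_{θ=1}^d p(d,θ) ∑_{ℓ=d−θ}^d ℓ b(d,z,ℓ)` (Section 3.2 of the paper). -/
noncomputable def hB (p : ℕ × ℕ → ℝ) (z : ℝ) : ℝ :=
  ∑' d : ℕ, ∑ θ ∈ Finset.Icc 1 d, p (d, θ) *
    ∑ ℓ ∈ Finset.Icc (d - θ) d, (ℓ : ℝ) * binomPMF d ℓ z

/-!
On `[0,1]` the series `h_B` is dominated termwise by `∑_θ d p(d,θ)`, whose sum over `d` is `λ`;
so `h_B` is continuous there, with `h_B(0) = 0` and `h_B(1) ≤ λ`. Hence `λz² − h_B(z)` is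
continuous, vanishes at `0` and, as `λ ≠ h_B(1)`, is positive at `1`. Its zero set in `[0,1]` is
closed, so `ẑ` is itself a zero and `ẑ < 1`; a non-positive value at some `z ∈ (ẑ,1]` would, by
the intermediate value theorem, produce a zero in `[z,1]`, beyond `ẑ`.
-/

open Set Finset

section Coincidence

variable {f g : ℝ → ℝ} {a b : ℝ}

theorem isClosed_coincidence_Icc (hf : ContinuousOn f (Icc a b)) (hg : ContinuousOn g (Icc a b)) :
    IsClosed {z | z ∈ Icc a b ∧ f z = g z} :=
  (hf.prodMk hg).preimage_isClosed_of_isClosed isClosed_Icc isClosed_diagonal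

theorem sSup_coincidence_lt_and_lt_of_gt (hab : a ≤ b) (hf : ContinuousOn f (Icc a b))
    (hg : ContinuousOn g (Icc a b)) (ha : f a = g a) (hb : g b < f b) :
    sSup {z | z ∈ Icc a b ∧ f z = g z} < b ∧
      ∀ z, sSup {z | z ∈ Icc a b ∧ f z = g z} < z → z ≤ b → g z < f z := by
  set S := {z | z ∈ Icc a b ∧ f z = g z}
  have haS : a ∈ S := ⟨left_mem_Icc.2 hab, ha⟩
  have hbdd : BddAbove S := ⟨b, fun z hz => hz.1.2⟩
  have hsupS : sSup S ∈ S := (isClosed_coincidence_Icc hf hg).csSup_mem ⟨a, haS⟩ hbdd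
  refine ⟨hsupS.1.2.lt_of_ne fun hsup => hb.ne' (hsup ▸ hsupS.2), fun z hz hzb => ?_⟩
  by_contra! hfg
  have hza : a ≤ z := (le_csSup hbdd haS).trans hz.le
  obtain ⟨c, hc, hfgc⟩ := intermediate_value_Icc hzb
    ((hf.sub hg).mono (Icc_subset_Icc hza le_rfl))
    (show (0 : ℝ) ∈ Icc (f z - g z) (f b - g b) from ⟨by linarith, by linarith⟩)
  have hcS : c ∈ S := ⟨⟨hza.trans hc.1, hc.2⟩, sub_eq_zero.1 hfgc⟩
  exact hz.not_ge (hc.1.trans (le_csSup hbdd hcS))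

end Coincidence

section Binomial

variable {d k ℓ : ℕ} {z : ℝ}

theorem binomPMF_nonneg (hz : z ∈ Icc (0 : ℝ) 1) : 0 ≤ binomPMF d ℓ z := by
  have : 0 ≤ 1 - z := sub_nonneg.2 hz.2
  have := hz.1
  unfold binomPMF
  positivity

theorem sum_range_binomPMF (d : ℕ) (z : ℝ) : ∑ ℓ ∈ range (d + 1), binomPMF d ℓ z = 1 := by
  have h := (add_pow z (1 - z) d).symm
  rw [add_sub_cancel, one_pow] at h
  rw [← h]
  exact sum_congr rfl fun ℓ _ => by unfold binomPMF; ring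

noncomputable def binomTailMean (d k : ℕ) (z : ℝ) : ℝ :=
  ∑ ℓ ∈ Finset.Icc k d, (ℓ : ℝ) * binomPMF d ℓ z

theorem binomTailMean_nonneg (hz : z ∈ Icc (0 : ℝ) 1) : 0 ≤ binomTailMean d k z :=
  sum_nonneg fun _ _ => mul_nonneg (Nat.cast_nonneg _) (binomPMF_nonneg hz)

theorem binomTailMean_le (hz : z ∈ Icc (0 : ℝ) 1) : binomTailMean d k z ≤ d :=
  calc binomTailMean d k z
      ≤ ∑ ℓ ∈ range (d + 1), (ℓ : ℝ) * binomPMF d ℓ z := by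
        refine sum_le_sum_of_subset_of_nonneg (fun ℓ hℓ => ?_)
          fun _ _ _ => mul_nonneg (Nat.cast_nonneg _) (binomPMF_nonneg hz)
        exact mem_range_succ_iff.2 (Finset.mem_Icc.1 hℓ).2
    _ ≤ ∑ ℓ ∈ range (d + 1), (d : ℝ) * binomPMF d ℓ z := by
        refine sum_le_sum fun ℓ hℓ => mul_le_mul_of_nonneg_right ?_ (binomPMF_nonneg hz)
        exact_mod_cast mem_range_succ_iff.1 hℓ
    _ = d := by rw [← mul_sum, sum_range_binomPMF, mul_one]

theorem binomTailMean_zero : binomTailMean d k 0 = 0 :=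
  sum_eq_zero fun ℓ _ => by rcases ℓ with _ | ℓ <;> simp [binomPMF]

theorem continuous_binomTailMean : Continuous (binomTailMean d k) := by
  unfold binomTailMean binomPMF
  fun_prop

end Binomial

section HB

variable {p : ℕ × ℕ → ℝ}

theorem hB_eq_tsum_binomTailMean (z : ℝ) :
    hB p z = ∑' d, ∑ θ ∈ Finset.Icc 1 d, p (d, θ) * binomTailMean d (d - θ) z :=
  rfl

theorem hB_zero : hB p 0 = 0 := by
  simp [hB_eq_tsum_binomTailMean, binomTailMean_zero]

variable (hp0 : ∀ dθ, 0 ≤ p dθ) (hmean : Summable fun dθ : ℕ × ℕ => (dθ.1 : ℝ) * p dθ)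
include hp0

theorem hB_summand_nonneg {z : ℝ} (hz : z ∈ Icc (0 : ℝ) 1) (d : ℕ) :
    0 ≤ ∑ θ ∈ Finset.Icc 1 d, p (d, θ) * binomTailMean d (d - θ) z :=
  sum_nonneg fun _ _ => mul_nonneg (hp0 _) (binomTailMean_nonneg hz)

include hmean

theorem hB_summand_le {z : ℝ} (hz : z ∈ Icc (0 : ℝ) 1) (d : ℕ) :
    ∑ θ ∈ Finset.Icc 1 d, p (d, θ) * binomTailMean d (d - θ) z ≤ ∑' θ, (d : ℝ) * p (d, θ) :=
  calc ∑ θ ∈ Finset.Icc 1 d, p (d, θ) * binomTailMean d (d - θ) z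
      ≤ ∑ θ ∈ Finset.Icc 1 d, (d : ℝ) * p (d, θ) :=
        sum_le_sum fun θ _ => by
          rw [mul_comm (d : ℝ)]
          exact mul_le_mul_of_nonneg_left (binomTailMean_le hz) (hp0 _)
    _ ≤ ∑' θ, (d : ℝ) * p (d, θ) :=
        (hmean.prod_factor d).sum_le_tsum _ fun θ _ => mul_nonneg (Nat.cast_nonneg _) (hp0 _)

theorem hB_continuousOn : ContinuousOn (hB p) (Icc 0 1) :=
  continuousOn_tsum (fun _ => (continuous_finsetSum _ fun _ _ =>
      continuous_const.mul continuous_binomTailMean).continuousOn) hmean.prod fun d _ hz =>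
    (Real.norm_of_nonneg (hB_summand_nonneg hp0 hz d)).trans_le (hB_summand_le hp0 hmean hz d)

theorem hB_one_le_tsum : hB p 1 ≤ ∑' dθ : ℕ × ℕ, (dθ.1 : ℝ) * p dθ := by
  have h1 : (1 : ℝ) ∈ Icc (0 : ℝ) 1 := right_mem_Icc.2 zero_le_one
  rw [hmean.tsum_prod, hB_eq_tsum_binomTailMean]
  exact Summable.tsum_le_tsum (hB_summand_le hp0 hmean h1)
    (hmean.prod.of_nonneg_of_le (hB_summand_nonneg hp0 h1) (hB_summand_le hp0 hmean h1))
    hmean.prod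

end HB

theorem strict_positivity_above_sup_general
    (p : ℕ × ℕ → ℝ) (hp0 : ∀ dθ, 0 ≤ p dθ)
    (hmean : Summable fun dθ : ℕ × ℕ => (dθ.1 : ℝ) * p dθ)
    (lam : ℝ) (hlam : lam = ∑' dθ : ℕ × ℕ, (dθ.1 : ℝ) * p dθ)
    (hne : lam ≠ hB p 1) :
    sSup {z : ℝ | z ∈ Set.Icc (0:ℝ) 1 ∧ lam * z ^ 2 = hB p z} < 1 ∧
    ∀ z : ℝ, sSup {z : ℝ | z ∈ Set.Icc (0:ℝ) 1 ∧ lam * z ^ 2 = hB p z} < z → z ≤ 1 →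
      hB p z < lam * z ^ 2 := by
  have hB1 : hB p 1 < lam := (hlam ▸ hB_one_le_tsum hp0 hmean).lt_of_ne hne.symm
  exact sSup_coincidence_lt_and_lt_of_gt zero_le_one (by fun_prop)
    (hB_continuousOn hp0 hmean) (by simp [hB_zero]) (by simpa using hB1)

/-- Key step in the proof of Lemma 1.4. Let `p : ℕ×ℕ → [0,1]` be a probability mass function
with mean degree `λ ∈ (0,∞)`, and `ẑ = sup {z ∈ [0,1] : λ z² = h_B(z)}`. If `λ ≠ h_B(1)`,
then `ẑ < 1` and `λ z² > h_B(z)` for every `z ∈ (ẑ, 1]`. -/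
theorem strict_positivity_above_sup
    (p : ℕ × ℕ → ℝ) (hp0 : ∀ dθ, 0 ≤ p dθ) (hp1 : ∀ dθ, p dθ ≤ 1)
    (hpsummable : Summable p) (hptotal : ∑' dθ : ℕ × ℕ, p dθ = 1)
    (hmean : Summable fun dθ : ℕ × ℕ => (dθ.1 : ℝ) * p dθ)
    (lam : ℝ) (hlam : lam = ∑' dθ : ℕ × ℕ, (dθ.1 : ℝ) * p dθ) (hlampos : 0 < lam)
    (hne : lam ≠ hB p 1) :
    sSup {z : ℝ | z ∈ Set.Icc (0:ℝ) 1 ∧ lam * z ^ 2 = hB p z} < 1 ∧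
    ∀ z : ℝ, sSup {z : ℝ | z ∈ Set.Icc (0:ℝ) 1 ∧ lam * z ^ 2 = hB p z} < z → z ≤ 1 →
      hB p z < lam * z ^ 2 :=
  strict_positivity_above_sup_general p hp0 hmean lam hlam hne
end

section
/- Fix integers d ≥ 1 and 0 ≤ m ≤ d, and p ∈ [0,1]; let (u_n) be nonnegative integers with u_n/n → p. For each n consider u_n independent bins, each containing d balls whose lifetimes are i.i.d. Exp(1) random variables (all balls independent), and let S_{n,k}(t) denote the number of balls of bin k alive at time t. Then sup_{t ≥ 0} |(1/n)·∑_{k=1}^{u_n} S_{n,k}(t)·1{S_{n,k}(t) ≥ m} − p·∑_{ℓ=max(m,1)}^{d} ℓ·b(d, e^{−t}, ℓ)| → 0 in probability as n → ∞. -/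
open MeasureTheory ProbabilityTheory Real Filter
open scoped Classical Topology

/-!
For a fixed time `t` the summands `S_{n,k}(t) 1{S_{n,k}(t) ≥ m}` are independent across bins,
take values in `[0, d]`, and have mean `∑_{ℓ ≥ max(m,1)} ℓ b(d, e^{-t}, ℓ)`, because the number of
surviving balls of a bin is `Binomial(d, e^{-t})`. Chebyshev's inequality therefore controls the
deviation at each point of a finite grid `0, η, …, Nη`. Uniformity in `t` is the Glivenko–Cantelli
argument: the empirical function is nonincreasing in `t`, while the limit is uniformly continuous
on `[0, ∞)` and tends to `0`, so closeness on a fine enough grid gives closeness everywhere.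
-/

open scoped unitInterval Finset

namespace WhiteBalls

section BinomialCount

variable {ι β : Type*} [Fintype ι] {P : β → Prop} [DecidablePred P]

lemma setOf_filter_eq_pi (s : Finset ι) :
    {x : ι → β | Finset.univ.filter (fun i => P (x i)) = s} =
      Set.univ.pi fun i => if i ∈ s then {y | P y} else {y | P y}ᶜ := by
  ext x
  simp only [Set.mem_ofPred_eq, Set.mem_univ_pi, Finset.ext_iff, Finset.mem_filter,
    Finset.mem_univ, true_and]
  refine forall_congr' fun i => ?_
  split_ifs with hi <;> simp [hi]

lemma setOf_card_filter_eq_biUnion (c : ℕ) :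
    {x : ι → β | #(Finset.univ.filter fun i => P (x i)) = c} =
      ⋃ s ∈ Finset.univ.powersetCard c, {x | Finset.univ.filter (fun i => P (x i)) = s} := by
  ext x
  simp [Finset.mem_powersetCard]

lemma prod_ite_mem_const_eq (s : Finset ι) (a b : ℝ) :
    ∏ i, (if i ∈ s then a else b) = a ^ #s * b ^ (Fintype.card ι - #s) := by
  rw [Finset.prod_ite, Finset.prod_const, Finset.prod_const, Finset.filter_mem_eq_inter,
    Finset.univ_inter, Finset.filter_not, Finset.filter_mem_eq_inter, Finset.univ_inter,
    Finset.card_univ_sdiff]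

variable [MeasurableSpace β] (hP : MeasurableSet {y | P y})
include hP

lemma measurableSet_setOf_filter_eq (s : Finset ι) :
    MeasurableSet {x : ι → β | Finset.univ.filter (fun i => P (x i)) = s} := by
  rw [setOf_filter_eq_pi]
  refine .univ_pi fun i => ?_
  split_ifs
  exacts [hP, hP.compl]

lemma measurable_card_filter :
    Measurable fun x : ι → β => #(Finset.univ.filter fun i => P (x i)) := by
  refine measurable_to_countable' fun c => ?_
  change MeasurableSet {x | _ = c}
  rw [setOf_card_filter_eq_biUnion]
  exact .biUnion (Finset.countable_toSet _) fun s _ => measurableSet_setOf_filter_eq hP s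

lemma hasLaw_card_filter_pi {ν : ι → Measure β} [∀ i, IsProbabilityMeasure (ν i)] {q : I}
    (hq : ∀ i, (ν i).real {y | P y} = q) :
    HasLaw (fun x : ι → β => #(Finset.univ.filter fun i => P (x i))) Bin(Fintype.card ι, q)
      (Measure.pi ν) where
  aemeasurable := (measurable_card_filter hP).aemeasurable
  map_eq := by
    refine Measure.ext_of_measureReal_singleton fun c => ?_
    have hcyl (s : Finset ι) (hs : s ∈ Finset.univ.powersetCard c) :
        (Measure.pi ν).real {x | Finset.univ.filter (fun i => P (x i)) = s} =
          q ^ c * (1 - q) ^ (Fintype.card ι - c) := by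
      rw [setOf_filter_eq_pi, measureReal_def, Measure.pi_pi, ENNReal.toReal_prod]
      simp_rw [← measureReal_def, apply_ite, probReal_compl_eq_one_sub hP, hq]
      rw [prod_ite_mem_const_eq, (Finset.mem_powersetCard.1 hs).2]
    rw [map_measureReal_apply (measurable_card_filter hP) (measurableSet_singleton c),
      binomial_real_singleton]
    simp only [Set.preimage, Set.mem_singleton_iff]
    rw [setOf_card_filter_eq_biUnion,
      measureReal_biUnion_finset (fun s _ s' _ hss' => Set.disjoint_left.2 fun x hs hs' =>
        hss' (hs.symm.trans hs')) fun s _ => measurableSet_setOf_filter_eq hP s,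
      Finset.sum_congr rfl hcyl, Finset.sum_const, Finset.card_powersetCard, Finset.card_univ,
      nsmul_eq_mul, mul_assoc]

lemma hasLaw_card_filter {Ω : Type*} [MeasurableSpace Ω] {μ : Measure Ω} {Y : ι → Ω → β}
    {ν : ι → Measure β} [∀ i, IsProbabilityMeasure (ν i)] (hY : ∀ i, HasLaw (Y i) (ν i) μ)
    (hind : iIndepFun Y μ) {q : I} (hq : ∀ i, (ν i).real {y | P y} = q) :
    HasLaw (fun ω => #(Finset.univ.filter fun i => P (Y i ω))) Bin(Fintype.card ι, q) μ :=
  (hasLaw_card_filter_pi hP hq).comp (hind.hasLaw_pi hY)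

end BinomialCount

-- A bin with `c` surviving balls is uninfected iff `c ≥ m`, and it then holds `c` white balls.
noncomputable def whiteBalls (m c : ℕ) : ℝ := (c : ℝ) * (if m ≤ c then 1 else 0)

noncomputable def binWhiteBalls {κ : Type*} [Fintype κ] (m : ℕ) (t : ℝ) (x : κ → ℝ) : ℝ :=
  whiteBalls m #(Finset.univ.filter fun i => t < x i)

noncomputable def whiteBallMean (d m : ℕ) (z : ℝ) : ℝ :=
  ∑ ℓ ∈ Finset.Icc (max m 1) d, (ℓ : ℝ) * binomPMF d ℓ z

lemma whiteBalls_nonneg (m c : ℕ) : 0 ≤ whiteBalls m c := by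
  unfold whiteBalls; positivity

lemma whiteBalls_le (m c : ℕ) : whiteBalls m c ≤ c := by
  unfold whiteBalls; split_ifs <;> simp

lemma monotone_whiteBalls (m : ℕ) : Monotone (whiteBalls m) := by
  intro c c' h
  by_cases hc : m ≤ c
  · simpa [whiteBalls, hc, hc.trans h] using h
  · simpa [whiteBalls, hc] using whiteBalls_nonneg m c'

lemma integral_whiteBalls_binomial (d m : ℕ) (q : I) :
    ∫ c, whiteBalls m c ∂Bin(d, q) = whiteBallMean d m q := by
  have hzero (ℓ : ℕ) (hℓ : ℓ ∉ Finset.Icc (max m 1) d) (hℓd : ℓ ≤ d) : whiteBalls m ℓ = 0 := by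
    simp only [Finset.mem_Icc, not_and, not_le] at hℓ
    by_cases h : m ≤ ℓ
    · simp [whiteBalls, h]; omega
    · simp [whiteBalls, h]
  rw [integral_binomial, whiteBallMean, ← Finset.sum_subset (s₁ := Finset.Icc (max m 1) d)
    (fun ℓ hℓ => by simp_all)
    fun ℓ hℓd hℓ => by simp [hzero ℓ hℓ (Finset.mem_Iic.1 hℓd)]]
  refine Finset.sum_congr rfl fun ℓ hℓ => ?_
  have : m ≤ ℓ := (le_max_left m 1).trans (Finset.mem_Icc.1 hℓ).1
  simp [whiteBalls, binomPMF, this, mul_comm]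

lemma continuous_whiteBallMean (d m : ℕ) : Continuous (whiteBallMean d m) := by
  unfold whiteBallMean binomPMF; fun_prop

lemma whiteBallMean_zero (d m : ℕ) : whiteBallMean d m 0 = 0 :=
  Finset.sum_eq_zero fun ℓ hℓ => by
    have : ℓ ≠ 0 := by simp at hℓ; omega
    simp [binomPMF, this]

lemma binWhiteBalls_nonneg {κ : Type*} [Fintype κ] (m : ℕ) (t : ℝ) (x : κ → ℝ) :
    0 ≤ binWhiteBalls m t x :=
  whiteBalls_nonneg _ _

lemma binWhiteBalls_le {κ : Type*} [Fintype κ] (m : ℕ) (t : ℝ) (x : κ → ℝ) :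
    binWhiteBalls m t x ≤ Fintype.card κ :=
  (whiteBalls_le _ _).trans (by exact_mod_cast Finset.card_le_univ _)

lemma antitone_binWhiteBalls {κ : Type*} [Fintype κ] (m : ℕ) (x : κ → ℝ) :
    Antitone fun t => binWhiteBalls m t x :=
  fun _ _ htt' => monotone_whiteBalls m <|
    Finset.card_le_card <| Finset.monotone_filter_right _ fun _ _ h => htt'.trans_lt h

lemma measurable_binWhiteBalls {κ : Type*} [Fintype κ] (m : ℕ) (t : ℝ) :
    Measurable (binWhiteBalls (κ := κ) m t) :=
  (measurable_from_nat (f := whiteBalls m)).comp (measurable_card_filter measurableSet_Ioi)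

-- Heine–Cantor: with `|t|` in place of `t` the function has a limit along `cocompact ℝ`.
lemma uniformContinuous_comp_exp_neg_abs {g : ℝ → ℝ} (hg : Continuous g) :
    UniformContinuous fun t => g (exp (-|t|)) :=
  (by fun_prop : Continuous fun t => g (exp (-|t|))).uniformContinuous_of_tendsto_cocompact
    ((hg.tendsto 0).comp <| tendsto_exp_atBot.comp <|
      tendsto_neg_atTop_atBot.comp tendsto_norm_cocompact_atTop)

lemma exists_grid_of_continuous {g : ℝ → ℝ} (hg : Continuous g) (hg0 : g 0 = 0) {ε : ℝ}
    (hε : 0 < ε) : ∃ η > (0 : ℝ), ∃ N : ℕ,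
      (∀ s t, 0 ≤ s → s ≤ t → t ≤ s + η → |g (exp (-s)) - g (exp (-t))| ≤ ε) ∧
      ∀ t, N * η ≤ t → |g (exp (-t))| ≤ ε := by
  obtain ⟨η, hη, hmod⟩ :=
    Metric.uniformContinuous_iff_le.1 (uniformContinuous_comp_exp_neg_abs hg) ε hε
  have htail : Tendsto (fun t => g (exp (-t))) atTop (𝓝 0) :=
    hg0 ▸ (hg.tendsto 0).comp tendsto_exp_neg_atTop_nhds_zero
  obtain ⟨t₀, ht₀⟩ := eventually_atTop.1 (htail.eventually (Metric.closedBall_mem_nhds 0 hε))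
  refine ⟨η, hη, ⌈t₀ / η⌉₊, fun s t hs hst hts => ?_, fun t ht => ?_⟩
  · have := @hmod s t (by rw [Real.dist_eq, abs_sub_comm, abs_of_nonneg (by linarith)]; linarith)
    rwa [Real.dist_eq, abs_of_nonneg hs, abs_of_nonneg (hs.trans hst)] at this
  · have : t₀ ≤ t := ((div_le_iff₀ hη).1 (Nat.le_ceil _)).trans ht
    simpa [Real.dist_eq] using ht₀ t this

lemma iSup_abs_sub_le_of_grid {F G : ℝ → ℝ} {ε η : ℝ} {N : ℕ} (hη : 0 < η) (hF : Antitone F)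
    (hF0 : ∀ t, 0 ≤ F t) (hG : ∀ s t, 0 ≤ s → s ≤ t → t ≤ s + η → |G s - G t| ≤ ε)
    (htail : ∀ t, N * η ≤ t → |G t| ≤ ε) (hgrid : ∀ j ≤ N, |F (j * η) - G (j * η)| ≤ ε) :
    ⨆ (t : ℝ) (_ : 0 ≤ t), |F t - G t| ≤ 3 * ε := by
  have hε : 0 ≤ ε := (abs_nonneg _).trans (hgrid 0 (Nat.zero_le N))
  refine Real.iSup_le (fun t => Real.iSup_le (fun ht => ?_) (by positivity)) (by positivity)
  rcases le_or_gt (N * η) t with hNt | htN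
  · have := abs_le.1 (htail t hNt)
    have := abs_le.1 (htail _ le_rfl)
    have := abs_le.1 (hgrid N le_rfl)
    have := hF hNt
    have := hF0 t
    rw [abs_le]; constructor <;> linarith
  · set j := ⌊t / η⌋₊
    have hjt : j * η ≤ t := by
      simpa [le_div_iff₀ hη] using Nat.floor_le (div_nonneg ht hη.le)
    have htj : t < (j + 1 : ℕ) * η := by
      simpa [div_lt_iff₀ hη] using Nat.lt_floor_add_one (t / η)
    have hjN : j + 1 ≤ N := by
      have : (j : ℝ) < N := by nlinarith
      exact_mod_cast this
    have := abs_le.1 (hG _ t (by positivity) hjt (by push_cast at htj; linarith))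
    have := abs_le.1 (hG t _ ht htj.le (by push_cast at htj ⊢; linarith))
    have := abs_le.1 (hgrid j (by omega))
    have := abs_le.1 (hgrid (j + 1) hjN)
    have := hF hjt
    have := hF htj.le
    rw [abs_le]; constructor <;> linarith

lemma iSup_abs_div_sub_mul_le_of_grid {S h : ℝ → ℝ} {n K p B δ η : ℝ} {N : ℕ} (hn : 0 < n)
    (hη : 0 < η) (hS : Antitone S) (hS0 : ∀ t, 0 ≤ S t) (hB : ∀ t, 0 ≤ t → |h t| ≤ B)
    (hK : |K / n - p| * B ≤ δ)
    (hmod : ∀ s t, 0 ≤ s → s ≤ t → t ≤ s + η → |p * h s - p * h t| ≤ 2 * δ)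
    (htail : ∀ t, N * η ≤ t → |p * h t| ≤ 2 * δ)
    (hgrid : ∀ j ≤ N, |S (j * η) - K * h (j * η)| ≤ δ * n) :
    ⨆ (t : ℝ) (_ : 0 ≤ t), |S t / n - p * h t| ≤ 6 * δ := by
  have hgrid' (j : ℕ) (hj : j ≤ N) : |S (j * η) / n - p * h (j * η)| ≤ 2 * δ := by
    have hsplit : S (j * η) / n - p * h (j * η) =
        (S (j * η) - K * h (j * η)) / n + (K / n - p) * h (j * η) := by
      field_simp; ring
    have h1 : |S (j * η) - K * h (j * η)| / n ≤ δ := by rw [div_le_iff₀ hn]; exact hgrid j hj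
    have h2 : |K / n - p| * |h (j * η)| ≤ δ :=
      (mul_le_mul_of_nonneg_left (hB _ (by positivity)) (abs_nonneg _)).trans hK
    calc |S (j * η) / n - p * h (j * η)|
        ≤ |S (j * η) - K * h (j * η)| / n + |K / n - p| * |h (j * η)| := by
          rw [hsplit, ← abs_of_pos hn, ← abs_div, ← abs_mul, abs_of_pos hn]; exact abs_add_le _ _
      _ ≤ 2 * δ := by linarith
  have := iSup_abs_sub_le_of_grid (F := fun t => S t / n) (G := fun t => p * h t) hη
    (fun s t hst => div_le_div_of_nonneg_right (hS hst) hn.le) (fun t => div_nonneg (hS0 t) hn.le)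
    hmod htail hgrid'
  linarith

lemma tendsto_ofReal_mul_div_mul_sq {u : ℕ → ℕ} {p : ℝ}
    (hu : Tendsto (fun n : ℕ => (u n : ℝ) / n) atTop (𝓝 p)) (C δ : ℝ) :
    Tendsto (fun n : ℕ => ENNReal.ofReal (u n * C / (δ * n) ^ 2)) atTop (𝓝 0) := by
  have : Tendsto (fun n : ℕ => C / δ ^ 2 * ((u n : ℝ) / n * (n : ℝ)⁻¹)) atTop (𝓝 0) := by
    simpa using (hu.mul tendsto_inv_atTop_nhds_zero_nat).const_mul (C / δ ^ 2)
  simpa using ENNReal.tendsto_ofReal (this.congr fun n => by ring)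

section Probability

variable {Ω : Type*} [MeasurableSpace Ω] {μ : Measure Ω} {d : ℕ}

lemma _root_.ProbabilityTheory.iIndepFun.indepFun_row {ι κ β : Type*} [Fintype κ]
    [MeasurableSpace β] {X : ι × κ → Ω → β} (h : iIndepFun X μ)
    (hX : ∀ x, AEMeasurable (X x) μ) {i j : ι} (hij : i ≠ j) :
    IndepFun (fun ω k => X (i, k) ω) (fun ω k => X (j, k) ω) μ := by
  set S : Finset (ι × κ) := {i} ×ˢ Finset.univ
  set T : Finset (ι × κ) := {j} ×ˢ Finset.univ
  have hdisj : Disjoint S T := by simp [S, T, Finset.disjoint_left, hij.symm]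
  have hS (k : κ) : (i, k) ∈ S := by simp [S]
  have hT (k : κ) : (j, k) ∈ T := by simp [T]
  exact (h.indepFun_finset₀ S T hdisj hX).comp (φ := fun y k => y ⟨(i, k), hS k⟩)
    (ψ := fun y k => y ⟨(j, k), hT k⟩) (by fun_prop) (by fun_prop)

lemma expMeasure_real_Ioi {t : ℝ} (ht : 0 ≤ t) : (expMeasure 1).real (Set.Ioi t) = exp (-t) := by
  have := isProbabilityMeasure_expMeasure one_pos
  rw [← Set.compl_Iic, probReal_compl_eq_one_sub measurableSet_Iic, ← cdf_eq_real,
    cdf_expMeasure_eq one_pos, if_pos ht, one_mul, sub_sub_cancel]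

lemma hasLaw_expMeasure_of_map_eq {X : Ω → ℝ} (h : μ.map X = expMeasure 1) :
    HasLaw X (expMeasure 1) μ where
  aemeasurable := .of_map_ne_zero (h ▸ (isProbabilityMeasure_expMeasure one_pos).ne_zero)
  map_eq := h

lemma integral_binWhiteBalls {Y : Fin d → Ω → ℝ} (hY : ∀ i, HasLaw (Y i) (expMeasure 1) μ)
    (hind : iIndepFun Y μ) (m : ℕ) {t : ℝ} (ht : 0 ≤ t) :
    ∫ ω, binWhiteBalls m t (Y · ω) ∂μ = whiteBallMean d m (exp (-t)) := by
  have := isProbabilityMeasure_expMeasure one_pos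
  let q : I := ⟨exp (-t), (exp_pos _).le, exp_le_one_iff.2 (neg_nonpos.2 ht)⟩
  have hlaw := hasLaw_card_filter measurableSet_Ioi hY hind (q := q)
    fun _ => expMeasure_real_Ioi ht
  rw [Fintype.card_fin] at hlaw
  exact (hlaw.integral_comp (f := whiteBalls m) .of_discrete).trans
    (integral_whiteBalls_binomial d m q)

variable [IsProbabilityMeasure μ]

lemma meas_ge_abs_sum_sub_le_of_pairwise_indepFun {ι : Type*} {s : Finset ι} {X : ι → Ω → ℝ}
    {a b c : ℝ} (hc : 0 < c) (hX : ∀ i ∈ s, AEMeasurable (X i) μ)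
    (hab : ∀ i ∈ s, ∀ ω, X i ω ∈ Set.Icc a b)
    (hind : (s : Set ι).Pairwise fun i j => IndepFun (X i) (X j) μ) :
    μ {ω | c ≤ |∑ i ∈ s, X i ω - ∑ i ∈ s, μ[X i]|} ≤
      ENNReal.ofReal (#s * ((b - a) / 2) ^ 2 / c ^ 2) := by
  have hL2 : ∀ i ∈ s, MemLp (X i) 2 μ := fun i hi =>
    memLp_of_bounded (.of_forall (hab i hi)) (hX i hi).aestronglyMeasurable 2
  have hmean : μ[∑ i ∈ s, X i] = ∑ i ∈ s, μ[X i] := by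
    simp_rw [Finset.sum_apply]
    exact integral_finsetSum s fun i hi => (hL2 i hi).integrable one_le_two
  have hvar : variance (∑ i ∈ s, X i) μ ≤ #s * ((b - a) / 2) ^ 2 := by
    rw [IndepFun.variance_sum hL2 hind, ← nsmul_eq_mul, ← Finset.sum_const]
    exact Finset.sum_le_sum fun i hi =>
      variance_le_sq_of_bounded (.of_forall (hab i hi)) (hX i hi)
  calc μ {ω | c ≤ |∑ i ∈ s, X i ω - ∑ i ∈ s, μ[X i]|}
      = μ {ω | c ≤ |(∑ i ∈ s, X i) ω - μ[∑ i ∈ s, X i]|} := by simp_rw [hmean, Finset.sum_apply]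
    _ ≤ ENNReal.ofReal (variance (∑ i ∈ s, X i) μ / c ^ 2) :=
        meas_ge_le_variance_div_sq (memLp_finsetSum' s hL2) hc
    _ ≤ _ := ENNReal.ofReal_le_ofReal (by gcongr)

lemma meas_ge_abs_sum_binWhiteBalls_sub_le {T : ℕ → Fin d → Ω → ℝ} {K : ℕ}
    (hindep : iIndepFun (fun x : Fin K × Fin d => T x.1 x.2) μ)
    (hdist : ∀ k < K, ∀ i : Fin d, μ.map (T k i) = expMeasure 1) (m : ℕ) {t a : ℝ}
    (ht : 0 ≤ t) (ha : 0 < a) :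
    μ {ω | a ≤ |∑ k ∈ Finset.range K, binWhiteBalls m t (T k · ω) -
      K * whiteBallMean d m (exp (-t))|} ≤ ENNReal.ofReal (K * (d / 2) ^ 2 / a ^ 2) := by
  have hT (x : Fin K × Fin d) : HasLaw (T x.1 x.2) (expMeasure 1) μ :=
    hasLaw_expMeasure_of_map_eq (hdist x.1 x.1.isLt x.2)
  have hmean : ∑ k ∈ Finset.range K, μ[fun ω => binWhiteBalls m t (T k · ω)] =
      K * whiteBallMean d m (exp (-t)) := by
    rw [Finset.sum_congr rfl fun k hk => integral_binWhiteBalls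
      (fun i => hT (⟨k, Finset.mem_range.1 hk⟩, i))
      (hindep.precomp (g := fun i => (⟨k, Finset.mem_range.1 hk⟩, i))
        fun i j h => (Prod.ext_iff.1 h).2) m ht,
      Finset.sum_const, Finset.card_range, nsmul_eq_mul]
  have hindep' : (Finset.range K : Set ℕ).Pairwise fun k j =>
      IndepFun (fun ω => binWhiteBalls m t (T k · ω)) (fun ω => binWhiteBalls m t (T j · ω)) μ :=
    fun k hk j hj hkj => (hindep.indepFun_row (fun x => (hT x).aemeasurable)
      (i := ⟨k, Finset.mem_range.1 hk⟩) (j := ⟨j, Finset.mem_range.1 hj⟩)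
      (by simpa [Fin.ext_iff] using hkj)).comp (measurable_binWhiteBalls m t)
        (measurable_binWhiteBalls m t)
  have := meas_ge_abs_sum_sub_le_of_pairwise_indepFun (a := 0) (b := d) ha
    (fun k hk => (measurable_binWhiteBalls m t).comp_aemeasurable <| aemeasurable_pi_lambda _
      fun i => (hT (⟨k, Finset.mem_range.1 hk⟩, i)).aemeasurable)
    (fun k _ ω => ⟨binWhiteBalls_nonneg _ _ _, by simpa using binWhiteBalls_le m t (T k · ω)⟩)
    hindep'
  simpa [hmean] using this

lemma meas_ge_iSup_abs_sub_le {T : ℕ → Fin d → Ω → ℝ} {K n N : ℕ} {p B δ η ε : ℝ}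
    (hindep : iIndepFun (fun x : Fin K × Fin d => T x.1 x.2) μ)
    (hdist : ∀ k < K, ∀ i : Fin d, μ.map (T k i) = expMeasure 1) (m : ℕ) (hn : 0 < n)
    (hη : 0 < η) (hδ : 0 < δ) (hε : 6 * δ < ε)
    (hB : ∀ z ∈ Set.Icc (0 : ℝ) 1, |whiteBallMean d m z| ≤ B) (hK : |K / n - p| * B ≤ δ)
    (hmod : ∀ s t, 0 ≤ s → s ≤ t → t ≤ s + η →
      |p * whiteBallMean d m (exp (-s)) - p * whiteBallMean d m (exp (-t))| ≤ 2 * δ)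
    (htail : ∀ t, N * η ≤ t → |p * whiteBallMean d m (exp (-t))| ≤ 2 * δ) :
    μ {ω | ε ≤ dist (⨆ (t : ℝ) (_ : 0 ≤ t),
      |(∑ k ∈ Finset.range K, binWhiteBalls m t (T k · ω)) / n -
        p * whiteBallMean d m (exp (-t))|) 0} ≤
      (N + 1 : ℕ) * ENNReal.ofReal (K * (d / 2) ^ 2 / (δ * n) ^ 2) := by
  have hn' : (0 : ℝ) < n := by exact_mod_cast hn
  let E : ℕ → Set Ω := fun j => {ω | δ * n ≤ |∑ k ∈ Finset.range K,
    binWhiteBalls m (j * η) (T k · ω) - K * whiteBallMean d m (exp (-(j * η)))|}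
  calc _ ≤ μ (⋃ j ∈ Finset.range (N + 1), E j) := measure_mono fun ω hω => ?_
    _ ≤ ∑ j ∈ Finset.range (N + 1), μ (E j) := measure_biUnion_finset_le _ _
    _ ≤ ∑ j ∈ Finset.range (N + 1), ENNReal.ofReal (K * (d / 2) ^ 2 / (δ * n) ^ 2) :=
        Finset.sum_le_sum fun j _ =>
          meas_ge_abs_sum_binWhiteBalls_sub_le hindep hdist m (by positivity) (by positivity)
    _ = _ := by simp
  by_contra hω'
  simp only [E, Set.mem_iUnion, Set.mem_ofPred_eq, not_exists, not_le, Finset.mem_range] at hω'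
  have := iSup_abs_div_sub_mul_le_of_grid (N := N) (K := K)
    (S := fun t => ∑ k ∈ Finset.range K, binWhiteBalls m t (T k · ω))
    (h := fun t => whiteBallMean d m (exp (-t))) hn' hη
    (fun s t hst => Finset.sum_le_sum fun k _ => antitone_binWhiteBalls m _ hst)
    (fun t => Finset.sum_nonneg fun k _ => binWhiteBalls_nonneg _ _ _)
    (fun t ht => hB _ ⟨(exp_pos _).le, exp_le_one_iff.2 (neg_nonpos.2 ht)⟩) hK hmod htail
    (fun j hj => (hω' j (Nat.lt_succ_of_le hj)).le)
  rw [Set.mem_ofPred_eq, dist_zero_right, Real.norm_of_nonneg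
    (Real.iSup_nonneg fun t => Real.iSup_nonneg fun _ => abs_nonneg _)] at hω
  linarith [hω.trans this]

end Probability

end WhiteBalls

open WhiteBalls in
theorem uniform_lln_white_balls_general
    {Ω : Type*} [MeasurableSpace Ω] (μ : Measure Ω) [IsProbabilityMeasure μ]
    (d m : ℕ)
    (p : ℝ)
    (u : ℕ → ℕ) (hu : Tendsto (fun n : ℕ => (u n : ℝ) / (n : ℝ)) atTop (𝓝 p))
    (T : ℕ → ℕ → Fin d → Ω → ℝ)
    (hindep : ∀ n, iIndepFun
      (fun x : Fin (u n) × Fin d => T n x.1 x.2) μ)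
    (hdist : ∀ n, ∀ k < u n, ∀ i : Fin d, μ.map (T n k i) = expMeasure 1) :
    TendstoInMeasure μ
      (fun (n : ℕ) (ω : Ω) => ⨆ (t : ℝ) (_ : 0 ≤ t),
        |(∑ k ∈ Finset.range (u n),
            (((Finset.univ.filter fun i : Fin d => t < T n k i ω).card : ℝ) *
              (if m ≤ (Finset.univ.filter fun i : Fin d => t < T n k i ω).card
                then 1 else 0))) / (n : ℝ)
          - p * ∑ ℓ ∈ Finset.Icc (max m 1) d, (ℓ : ℝ) * binomPMF d ℓ (Real.exp (-t))|)
      atTop (fun _ => (0 : ℝ)) := by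
  rw [tendstoInMeasure_iff_dist]
  intro ε hε
  obtain ⟨B, hB⟩ := (isCompact_Icc (a := (0 : ℝ)) (b := 1)).exists_bound_of_continuousOn
    (continuous_whiteBallMean d m).continuousOn
  obtain ⟨η, hη, N, hmod, htail⟩ := exists_grid_of_continuous
    (g := fun z => p * whiteBallMean d m z) (continuous_const.mul (continuous_whiteBallMean d m))
    (by simp [whiteBallMean_zero]) (by positivity : 0 < 2 * (ε / 7))
  have hK : ∀ᶠ n : ℕ in atTop, |(u n : ℝ) / n - p| * B ≤ ε / 7 :=
    ((hu.sub_const p).abs.mul_const B).eventually_le_const (by simpa using hε)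
  have hlim := ENNReal.Tendsto.const_mul (tendsto_ofReal_mul_div_mul_sq hu ((d / 2) ^ 2) (ε / 7))
    (Or.inr (ENNReal.natCast_ne_top (N + 1)))
  rw [mul_zero] at hlim
  refine tendsto_of_tendsto_of_tendsto_of_le_of_le' tendsto_const_nhds hlim
    (.of_forall fun _ => zero_le) ?_
  filter_upwards [hK, eventually_gt_atTop 0] with n hK hn
  exact meas_ge_iSup_abs_sub_le (hindep n) (hdist n) m hn hη (by positivity) (by linarith) hB hK
    hmod htail

/-- **Uniform LLN for the number of white balls in surviving bins** (single-class version of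
equation (3.30) of the paper). Fix `d ≥ 1`, `0 ≤ m ≤ d`, `p ∈ [0,1]`, and `u_n/n → p`. For
each `n` consider `u_n` independent bins of `d` balls with i.i.d. `Exp(1)` lifetimes, and let
`S_{n,k}(t)` be the number of balls of bin `k` alive at time `t`. Then
`sup_{t ≥ 0} |(1/n) ∑_{k<u_n} S_{n,k}(t) 1{S_{n,k}(t) ≥ m} − p ∑_{ℓ=max(m,1)}^d ℓ b(d,e^{−t},ℓ)| → 0`
in probability as `n → ∞`. -/
theorem uniform_lln_white_balls
    {Ω : Type*} [MeasurableSpace Ω] (μ : Measure Ω) [IsProbabilityMeasure μ]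
    (d m : ℕ) (hd : 1 ≤ d) (hmd : m ≤ d)
    (p : ℝ) (hp0 : 0 ≤ p) (hp1 : p ≤ 1)
    (u : ℕ → ℕ) (hu : Tendsto (fun n : ℕ => (u n : ℝ) / (n : ℝ)) atTop (𝓝 p))
    (T : ℕ → ℕ → Fin d → Ω → ℝ)
    (hindep : ∀ n, iIndepFun
      (fun x : Fin (u n) × Fin d => T n x.1 x.2) μ)
    (hdist : ∀ n, ∀ k < u n, ∀ i : Fin d, μ.map (T n k i) = expMeasure 1) :
    TendstoInMeasure μ
      (fun (n : ℕ) (ω : Ω) => ⨆ (t : ℝ) (_ : 0 ≤ t),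
        |(∑ k ∈ Finset.range (u n),
            (((Finset.univ.filter fun i : Fin d => t < T n k i ω).card : ℝ) *
              (if m ≤ (Finset.univ.filter fun i : Fin d => t < T n k i ω).card
                then 1 else 0))) / (n : ℝ)
          - p * ∑ ℓ ∈ Finset.Icc (max m 1) d, (ℓ : ℝ) * binomPMF d ℓ (Real.exp (-t))|)
      atTop (fun _ => (0 : ℝ)) :=
  uniform_lln_white_balls_general μ d m p u hu T hindep hdist
end
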